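/- On ℓ_1 spaces, p-compact equals right p-nuclear: Let 1 ≤ p < ∞, let I be a set and Y a Banach space. If T : ℓ_1(I) → Y is p-compact, then T is right p-nuclear and ν^p(T) = κ_p(T). -/

import Mathlib

noncomputable section

open scoped ENNReal NNReal

/-- The conjugate exponent `p'` of `p : ℝ≥0∞`, characterized by `1/p + 1/p' = 1`
(with the conventions `1' = ∞` and `∞' = 1`). -/
def conjExp (p : ℝ≥0∞) : ℝ≥0∞ := (1 - 1/p)⁻¹

theorem one_le_conjExp (p : ℝ≥0∞) : 1 ≤ conjExp p := by
  rw [conjExp]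
  rw [ENNReal.one_le_inv]
  exact tsub_le_self

instance (p : ℝ≥0∞) : Fact (1 ≤ conjExp p) := ⟨one_le_conjExp p⟩

/-- The `ℓ_p`-norm `(∑ₙ ‖y n‖^p)^(1/p)` of a `p`-summable sequence `y`. -/
def lpNorm {X : Type*} [NormedAddCommGroup X] (p : ℝ≥0∞) (y : ℕ → X)
    (hy : Memℓp y p) : ℝ :=
  ‖(⟨y, hy⟩ : lp (fun _ : ℕ => X) p)‖

/-- The `p`-convex hull of a sequence `x` in `X`, taken with respect to the exponent `q`
(in the applications below, `q` is the conjugate exponent of `p`):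
the set of all sums `∑ₙ αₙ • xₙ` with `(αₙ) ∈ ℓ_q`, `‖(αₙ)‖_q ≤ 1`. -/
def pCo (𝕜 : Type*) [RCLike 𝕜] {X : Type*} [NormedAddCommGroup X] [NormedSpace 𝕜 X]
    (q : ℝ≥0∞) (x : ℕ → X) : Set X :=
  {v | ∃ α : lp (fun _ : ℕ => 𝕜) q, ‖α‖ ≤ 1 ∧ HasSum (fun n => α n • x n) v}

/-- A set `K ⊆ X` is relatively `p`-compact if it is contained in the `p`-convex hull of a
`p`-summable sequence of `X`. -/
def RelPCompact (𝕜 : Type*) [RCLike 𝕜] {X : Type*} [NormedAddCommGroup X]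
    [NormedSpace 𝕜 X] (p : ℝ≥0∞) (K : Set X) : Prop :=
  ∃ x : ℕ → X, Memℓp x p ∧ K ⊆ pCo 𝕜 (conjExp p) x

/-- A bounded linear map is `p`-compact if the image of the closed unit ball is contained in
the `p`-convex hull of a `p`-summable sequence of the target space. -/
def IsPCompact (𝕜 : Type*) [RCLike 𝕜] {X Y : Type*}
    [SeminormedAddCommGroup X] [NormedSpace 𝕜 X]
    [NormedAddCommGroup Y] [NormedSpace 𝕜 Y] (p : ℝ≥0∞) (T : X →L[𝕜] Y) : Prop :=
  ∃ y : ℕ → Y, Memℓp y p ∧ T '' Metric.closedBall 0 1 ⊆ pCo 𝕜 (conjExp p) y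

/-- The `p`-compact norm `κ_p(T) = inf { ‖(yₙ)‖_p : T(B_X) ⊆ p-co((yₙ)) }`. -/
def kappa (𝕜 : Type*) [RCLike 𝕜] {X Y : Type*}
    [SeminormedAddCommGroup X] [NormedSpace 𝕜 X]
    [NormedAddCommGroup Y] [NormedSpace 𝕜 Y] (p : ℝ≥0∞) (T : X →L[𝕜] Y) : ℝ :=
  sInf {c : ℝ | ∃ (y : ℕ → Y) (hy : Memℓp y p),
    T '' Metric.closedBall 0 1 ⊆ pCo 𝕜 (conjExp p) y ∧ c = lpNorm p y hy}

/-- `C` is an upper bound for the weak `ℓ_q`-norm of the sequence `(x'ₙ)` of functionals,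
i.e. `‖(x'ₙ(x))ₙ‖_q ≤ C‖x‖` for every `x` (equivalently,
`sup_{‖x‖ ≤ 1} ‖(x'ₙ(x))ₙ‖_q ≤ C`). -/
def WeakLpBound (𝕜 : Type*) [RCLike 𝕜] {X : Type*} [SeminormedAddCommGroup X]
    [NormedSpace 𝕜 X] (q : ℝ≥0∞) (x' : ℕ → (X →L[𝕜] 𝕜)) (C : ℝ) : Prop :=
  ∀ x : X, ∃ h : Memℓp (fun n => x' n x) q, lpNorm q (fun n => x' n x) h ≤ C * ‖x‖

/-- A bounded linear map `T : X → Y` is right `p`-nuclear if `T x = ∑ₙ x'ₙ(x) yₙ` for some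
weakly `p'`-summable sequence `(x'ₙ)` in `X'` and some `(yₙ)` with `∑ₙ ‖yₙ‖^p < ∞`. -/
def IsRightPNuclear (𝕜 : Type*) [RCLike 𝕜] {X Y : Type*}
    [SeminormedAddCommGroup X] [NormedSpace 𝕜 X]
    [NormedAddCommGroup Y] [NormedSpace 𝕜 Y] (p : ℝ≥0∞) (T : X →L[𝕜] Y) : Prop :=
  ∃ (x' : ℕ → (X →L[𝕜] 𝕜)) (y : ℕ → Y) (C : ℝ), 0 ≤ C ∧
    WeakLpBound 𝕜 (conjExp p) x' C ∧ Memℓp y p ∧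
    ∀ x : X, HasSum (fun n => x' n x • y n) (T x)

/-- The right `p`-nuclear norm
`ν^p(T) = inf ‖(x'ₙ)‖^w_{p'} ⬝ (∑ₙ ‖yₙ‖^p)^{1/p}` over all representations of `T`. -/
def nuP (𝕜 : Type*) [RCLike 𝕜] {X Y : Type*}
    [SeminormedAddCommGroup X] [NormedSpace 𝕜 X]
    [NormedAddCommGroup Y] [NormedSpace 𝕜 Y] (p : ℝ≥0∞) (T : X →L[𝕜] Y) : ℝ :=
  sInf {c : ℝ | ∃ (x' : ℕ → (X →L[𝕜] 𝕜)) (y : ℕ → Y) (C : ℝ) (hy : Memℓp y p), 0 ≤ C ∧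
    WeakLpBound 𝕜 (conjExp p) x' C ∧
    (∀ x : X, HasSum (fun n => x' n x • y n) (T x)) ∧
    c = C * lpNorm p y hy}

/-!
On `ℓ₁(I)` every `x` is the norm-convergent sum `∑ᵢ xᵢ eᵢ`, and the unit vectors `eᵢ` lie in the
unit ball. If `T(B) ⊆ p-co(y)`, then `T eᵢ = ∑ₙ αᵢₙ yₙ` with `‖αᵢ‖_{p'} ≤ 1`; the bounded family
`(αᵢ)` defines a contraction `A : ℓ₁(I) → ℓ_{p'}` with `A eᵢ = αᵢ`, and by Hölder `Φ α = ∑ₙ αₙ yₙ`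
is a bounded operator `ℓ_{p'} → Y` with `Φ ∘ A = T`. The coordinates of `A` form a sequence
`(x'ₙ)` of weak `ℓ_{p'}`-norm at most `1` with `T x = ∑ₙ x'ₙ(x) yₙ`. Conversely, a representation
`(x'ₙ, yₙ)` with weak bound `C` gives `T(B) ⊆ p-co(C y)`. So the numbers over which `ν^p(T)` and
`κ_p(T)` are infima form the same set.
-/

theorem holderConjugate_conjExp {p : ℝ≥0∞} (hp : 1 ≤ p) : (conjExp p).HolderConjugate p := by
  rw [ENNReal.holderConjugate_iff, conjExp, inv_inv, one_div,
    tsub_add_cancel_of_le (ENNReal.inv_le_one.2 hp)]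

theorem lpNorm_const_smul {𝕜 X : Type*} [RCLike 𝕜] [NormedAddCommGroup X] [NormedSpace 𝕜 X]
    {p : ℝ≥0∞} (hp : p ≠ 0) (c : 𝕜) {y : ℕ → X} (hy : Memℓp y p) :
    lpNorm p (c • y) (hy.const_smul c) = ‖c‖ * lpNorm p y hy :=
  lp.norm_const_smul hp (⟨y, hy⟩ : lp (fun _ : ℕ => X) p)

section SMulPairing

variable {𝕜 ι V : Type*} [RCLike 𝕜] [NormedAddCommGroup V] [NormedSpace 𝕜 V] [CompleteSpace V]
  (r s : ℝ≥0∞) [Fact (1 ≤ r)] [Fact (1 ≤ s)] [r.HolderConjugate s]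

def lp.smulPairing : lp (fun _ : ι => 𝕜) r →L[𝕜] lp (fun _ : ι => V) s →L[𝕜] V :=
  lp.dualPairing r s (fun _ => ContinuousLinearMap.lsmul 𝕜 𝕜) (K := 1)
    fun _ => ContinuousLinearMap.opNorm_lsmul_le

theorem lp.hasSum_smulPairing (a : lp (fun _ : ι => 𝕜) r) (v : lp (fun _ : ι => V) s) :
    HasSum (fun i => a i • v i) (lp.smulPairing r s a v) := by
  -- the summands are the coordinates of an element of `ℓ₁(V)`
  have h := (lp.memℓp (lp.holderL (p := r) (q := s) 1
    (fun _ : ι => ContinuousLinearMap.lsmul 𝕜 𝕜) (K := 1)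
    (fun _ => ContinuousLinearMap.opNorm_lsmul_le) a v)).summable (by simp)
  simp only [ENNReal.toReal_one, Real.rpow_one] at h
  exact (Summable.of_norm h).hasSum

theorem lp.norm_smulPairing_apply_le (a : lp (fun _ : ι => 𝕜) r) (v : lp (fun _ : ι => V) s) :
    ‖lp.smulPairing r s a v‖ ≤ ‖a‖ * ‖v‖ := by
  have hP : ‖(lp.smulPairing r s :
      lp (fun _ : ι => 𝕜) r →L[𝕜] lp (fun _ : ι => V) s →L[𝕜] V)‖ ≤ 1 :=
    lp.norm_dualPairing _ _
  simpa using ContinuousLinearMap.le_of_opNorm₂_le_of_le _ hP le_rfl le_rfl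

end SMulPairing

theorem lp.exists_clm_one_single_eq {𝕜 ι V : Type*} [RCLike 𝕜] [NormedAddCommGroup V]
    [NormedSpace 𝕜 V] [CompleteSpace V] [DecidableEq ι] {C : ℝ} (hC : 0 ≤ C) (v : ι → V)
    (hv : ∀ i, ‖v i‖ ≤ C) :
    ∃ A : lp (fun _ : ι => 𝕜) 1 →L[𝕜] V,
      (∀ x, ‖A x‖ ≤ C * ‖x‖) ∧ ∀ i, A (lp.single 1 i 1) = v i := by
  let v' : lp (fun _ : ι => V) ∞ := ⟨v, memℓp_infty ⟨C, Set.forall_mem_range.2 hv⟩⟩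
  have hv' : ‖v'‖ ≤ C := lp.norm_le_of_forall_le hC hv
  refine ⟨(lp.smulPairing 1 ∞).flip v', fun x => ?_, fun i => ?_⟩
  · calc ‖lp.smulPairing 1 ∞ x v'‖ ≤ ‖x‖ * ‖v'‖ := lp.norm_smulPairing_apply_le 1 ∞ x v'
      _ ≤ C * ‖x‖ := by rw [mul_comm]; gcongr
  · refine (lp.hasSum_smulPairing 1 ∞ _ v').unique ?_
    convert hasSum_ite_eq i (v i) using 2 with j
    simp only [lp.single_apply, Pi.single_apply]
    split_ifs <;> simp_all [v']

section Representation

variable {𝕜 Y : Type*} [RCLike 𝕜] [NormedAddCommGroup Y] [NormedSpace 𝕜 Y]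

theorem exists_weakLpBound_hasSum_of_image_subset_pCo [CompleteSpace Y] {I : Type*}
    {p : ℝ≥0∞} (hp : 1 ≤ p) (T : lp (fun _ : I => 𝕜) 1 →L[𝕜] Y) {y : ℕ → Y} (hy : Memℓp y p)
    (hTy : T '' Metric.closedBall 0 1 ⊆ pCo 𝕜 (conjExp p) y) :
    ∃ x' : ℕ → (lp (fun _ : I => 𝕜) 1 →L[𝕜] 𝕜),
      WeakLpBound 𝕜 (conjExp p) x' 1 ∧ ∀ x, HasSum (fun n => x' n x • y n) (T x) := by
  classical
  have : Fact (1 ≤ p) := ⟨hp⟩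
  have := holderConjugate_conjExp hp
  have hTe : ∀ i, T (lp.single 1 i 1) ∈ pCo 𝕜 (conjExp p) y := fun i =>
    hTy ⟨_, by simp [lp.norm_single], rfl⟩
  choose α hα hαy using hTe
  obtain ⟨A, hA, hAe⟩ := lp.exists_clm_one_single_eq (𝕜 := 𝕜) zero_le_one α hα
  let Φ : lp (fun _ : ℕ => 𝕜) (conjExp p) →L[𝕜] Y := (lp.smulPairing (conjExp p) p).flip ⟨y, hy⟩
  have hΦA : Φ ∘L A = T := by
    refine lp.ext_continuousLinearMap ENNReal.one_ne_top fun i => ?_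
    ext
    simp only [ContinuousLinearMap.comp_apply, lp.singleContinuousLinearMap_apply, hAe]
    exact (lp.hasSum_smulPairing _ _ (α i) ⟨y, hy⟩).unique (hαy i)
  refine ⟨fun n => lp.evalCLM 𝕜 _ _ n ∘L A, fun x => ⟨(A x).2, hA x⟩, fun x => ?_⟩
  rw [← hΦA]
  exact lp.hasSum_smulPairing _ _ (A x) ⟨y, hy⟩

theorem image_subset_pCo_const_smul_of_hasSum {X : Type*} [SeminormedAddCommGroup X]
    [NormedSpace 𝕜 X] {p : ℝ≥0∞} (T : X →L[𝕜] Y) {x' : ℕ → (X →L[𝕜] 𝕜)} {y : ℕ → Y}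
    {C : ℝ} (hC : 0 ≤ C) (hx' : WeakLpBound 𝕜 (conjExp p) x' C)
    (hT : ∀ x, HasSum (fun n => x' n x • y n) (T x)) :
    T '' Metric.closedBall 0 1 ⊆ pCo 𝕜 (conjExp p) ((C : 𝕜) • y) := by
  rintro _ ⟨x, hx, rfl⟩
  obtain ⟨hβ, hβx⟩ := hx' x
  let β : lp (fun _ : ℕ => 𝕜) (conjExp p) := ⟨fun n => x' n x, hβ⟩
  have hβC : ‖β‖ ≤ C := hβx.trans (mul_le_of_le_one_right hC (mem_closedBall_zero_iff.1 hx))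
  -- for `C = 0` we have `C⁻¹ * C = 0`, but then `β = 0`
  have hcancel : ∀ n, ((C : 𝕜)⁻¹ * C) * β n = β n := by
    intro n
    rcases eq_or_ne C 0 with rfl | hC0
    · have : ‖β n‖ ≤ 0 :=
        (lp.norm_apply_le_norm (zero_lt_one.trans_le (one_le_conjExp p)).ne' β n).trans hβC
      rw [norm_le_zero_iff.1 this, mul_zero]
    · rw [inv_mul_cancel₀ (RCLike.ofReal_ne_zero.2 hC0), one_mul]
  refine ⟨(C : 𝕜)⁻¹ • β, ?_, ?_⟩
  · rw [norm_smul, norm_inv, RCLike.norm_ofReal, abs_of_nonneg hC]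
    rcases eq_or_ne C 0 with rfl | hC0
    · simp
    · exact inv_mul_le_one_of_le₀ hβC hC
  · convert hT x using 2 with n
    simp only [lp.coeFn_smul, Pi.smul_apply, smul_smul, smul_eq_mul]
    rw [mul_right_comm, hcancel]

end Representation

theorem isRightPNuclear_of_isPCompact_lp_one_general {𝕜 Y : Type*} (I : Type*) [RCLike 𝕜]
    [NormedAddCommGroup Y] [NormedSpace 𝕜 Y] [CompleteSpace Y]
    (p : ℝ≥0∞) (hp1 : 1 ≤ p)
    (T : lp (fun _ : I => 𝕜) 1 →L[𝕜] Y) (hT : IsPCompact 𝕜 p T) :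
    IsRightPNuclear 𝕜 p T ∧ nuP 𝕜 p T = kappa 𝕜 p T := by
  obtain ⟨y, hy, hTy⟩ := hT
  obtain ⟨x', hx', hTx'⟩ := exists_weakLpBound_hasSum_of_image_subset_pCo hp1 T hy hTy
  refine ⟨⟨x', y, 1, zero_le_one, hx', hy, hTx'⟩, congrArg sInf (Set.ext fun c => ⟨?_, ?_⟩)⟩
  · rintro ⟨x', y, C, hy, hC, hx', hTx', rfl⟩
    refine ⟨_, hy.const_smul (C : 𝕜), image_subset_pCo_const_smul_of_hasSum T hC hx' hTx', ?_⟩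
    rw [lpNorm_const_smul (zero_lt_one.trans_le hp1).ne', RCLike.norm_ofReal, abs_of_nonneg hC]
  · rintro ⟨y, hy, hTy, rfl⟩
    obtain ⟨x', hx', hTx'⟩ := exists_weakLpBound_hasSum_of_image_subset_pCo hp1 T hy hTy
    exact ⟨x', y, 1, hy, zero_le_one, hx', hTx', (one_mul _).symm⟩

/-- **On `ℓ_1` spaces, `p`-compact equals right `p`-nuclear.** If `T : ℓ_1(I) → Y` is
`p`-compact, then `T` is right `p`-nuclear and `ν^p(T) = κ_p(T)`. -/
theorem isRightPNuclear_of_isPCompact_lp_one {𝕜 Y : Type*} (I : Type*) [RCLike 𝕜]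
    [NormedAddCommGroup Y] [NormedSpace 𝕜 Y] [CompleteSpace Y]
    (p : ℝ≥0∞) (hp1 : 1 ≤ p) (hp : p ≠ ∞)
    (T : lp (fun _ : I => 𝕜) 1 →L[𝕜] Y) (hT : IsPCompact 𝕜 p T) :
    IsRightPNuclear 𝕜 p T ∧ nuP 𝕜 p T = kappa 𝕜 p T :=
  isRightPNuclear_of_isPCompact_lp_one_general I p hp1 T hT
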